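/- arXiv:math/0608606 — 5 statements merged into one kernel-verified Lean document; each statement's English description precedes it below -/
import Mathlib

section
/- Define P_n(u) = ∑_{i=1}^∞ i^(n-1) * (u/(1+u))^i as a formal power series in ℤ[[u]] for n ≥ 1. Then P_n(u) is a polynomial in u of degree n; more precisely, P_n(u) = ∑_{m=1}^n (m-1)! * S(n,m) * u^m, where S(n,m) denotes the Stirling number of the second kind. -/
open PowerSeries

open Nat

/-- Stirling numbers of the second kind: number of partitions of an `n`-set into `m`
non-empty blocks, given by the standard recurrence. -/
def stirling : ℕ → ℕ → ℕ
  | 0, 0 => 1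
  | 0, _ + 1 => 0
  | _ + 1, 0 => 0
  | n + 1, m + 1 => (m + 1) * stirling n (m + 1) + stirling n m

/-- The formal power series ∑_{i≥1} i^(n-1) (u/(1+u))^i in ℚ⟦u⟧.  Since (u/(1+u))^i
has order i, its coefficient of u^d only involves 1 ≤ i ≤ d, so the sum is finite. -/
noncomputable def Pseries (n : ℕ) : PowerSeries ℚ :=
  PowerSeries.mk fun d =>
    ∑ i ∈ Finset.Icc 1 d, (i : ℚ) ^ (n - 1) *
      PowerSeries.coeff d ((X * (1 + X : PowerSeries ℚ)⁻¹) ^ i)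

/-! ### Auxiliary combinatorial lemmas -/

lemma stirling_eq_zero : ∀ n m : ℕ, n < m → stirling n m = 0 := by
  intro n
  induction n with
  | zero =>
    intro m hm
    match m, hm with
    | m + 1, _ => rfl
  | succ n ih =>
    intro m hm
    match m, hm with
    | m + 1, hm =>
      show (m + 1) * stirling n (m + 1) + stirling n m = 0
      rw [ih (m + 1) (by omega), ih m (by omega)]
      simp

lemma stirling_zero_right (n : ℕ) (hn : 1 ≤ n) : stirling n 0 = 0 := by
  match n, hn with
  | n + 1, _ => rfl

lemma stirling_one_right : ∀ n : ℕ, stirling (n + 1) 1 = 1 := by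
  intro n
  induction n with
  | zero => rfl
  | succ n ih =>
    show 1 * stirling (n + 1) 1 + stirling (n + 1) 0 = 1
    rw [ih, stirling_zero_right (n + 1) (by omega)]

lemma neg_one_pow_congr' {a b : ℕ} (h : a % 2 = b % 2) : (-1 : ℚ) ^ a = (-1) ^ b := by
  rcases Nat.even_or_odd a with ha | ha
  · have hb : Even b := by
      rw [Nat.even_iff] at ha ⊢; omega
    rw [ha.neg_one_pow, hb.neg_one_pow]
  · have hb : Odd b := by
      rw [Nat.odd_iff] at ha ⊢; omega
    rw [ha.neg_one_pow, hb.neg_one_pow]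

/-- The finite alternating sum `L n d = ∑_{j<d} (-1)^{d+1+j} C(d-1,j) (j+1)^{n-1}`, which will be
shown to equal the coefficient of `u^d` in `P_n`. -/
noncomputable def Lsum (n d : ℕ) : ℚ :=
  ∑ j ∈ Finset.range d, (-1 : ℚ) ^ (d + 1 + j) * ((d - 1).choose j) * (j + 1) ^ (n - 1)

lemma Lsum_zero (n : ℕ) : Lsum n 0 = 0 := by simp [Lsum]

lemma Lsum_one (n : ℕ) : Lsum n 1 = 1 := by
  simp [Lsum, Finset.sum_range_succ]

/-- Base case: `L 1 (e+1)` is `1` if `e = 0` and `0` otherwise. -/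
lemma Lsum_base (e : ℕ) : Lsum 1 (e + 1) = if e = 0 then 1 else 0 := by
  have h := Int.alternating_sum_range_choose (n := e)
  have h' : (∑ m ∈ Finset.range (e + 1), ((-1 : ℚ) ^ m * e.choose m))
      = if e = 0 then 1 else 0 := by
    have := congrArg (fun z : ℤ => (z : ℚ)) h
    push_cast at this
    simpa using this
  unfold Lsum
  simp only [Nat.add_sub_cancel]
  have key : ∑ j ∈ Finset.range (e + 1),
        (-1 : ℚ) ^ (e + 1 + 1 + j) * (e.choose j) * ((j : ℚ) + 1) ^ (1 - 1)
      = (-1 : ℚ) ^ e * ∑ m ∈ Finset.range (e + 1), ((-1 : ℚ) ^ m * e.choose m) := by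
    rw [Finset.mul_sum]
    apply Finset.sum_congr rfl
    intro j _
    have hs : (-1 : ℚ) ^ (e + 1 + 1 + j) = (-1 : ℚ) ^ e * (-1 : ℚ) ^ j := by
      rw [show e + 1 + 1 + j = e + j + 2 by omega, pow_add, pow_add]
      ring
    rw [hs]
    norm_num
    ring
  rw [key, h']
  by_cases he : e = 0
  · subst he; simp
  · simp [he]

/-- The key recurrence `L (n+1) (e+1) = (e+1) L n (e+1) + e L n e` for `n ≥ 1`. -/
lemma Lsum_rec (a e : ℕ) :
    Lsum (a + 2) (e + 1) = (e + 1) * Lsum (a + 1) (e + 1) + e * Lsum (a + 1) e := by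
  rcases e with _ | f
  · simp [Lsum_one, Lsum_zero]
  -- now e = f + 1
  set N : ℚ := ∑ k ∈ Finset.range (f + 1), (-1 : ℚ) ^ (f + k) * (f.choose k) * ((k : ℚ) + 2) ^ a
    with hN
  set Q : ℚ := ∑ k ∈ Finset.range (f + 1),
      (-1 : ℚ) ^ (f + k) * (f.choose (k + 1)) * ((k : ℚ) + 2) ^ a with hQ
  have hL2 : Lsum (a + 1) (f + 2) = N + Q + (-1) ^ (f + 3) := by
    unfold Lsum
    simp only [show f + 2 - 1 = f + 1 from by omega, show a + 1 - 1 = a from by omega]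
    rw [Finset.sum_range_succ']
    rw [hN, hQ, ← Finset.sum_add_distrib]
    congr 1
    · apply Finset.sum_congr rfl
      intro k _
      have hs : (-1 : ℚ) ^ (f + 2 + 1 + (k + 1)) = (-1 : ℚ) ^ (f + k) :=
        neg_one_pow_congr' (by omega)
      rw [hs, Nat.choose_succ_succ f k]
      push_cast
      ring
    · have hs : (-1 : ℚ) ^ (f + 2 + 1 + 0) = (-1 : ℚ) ^ (f + 3) :=
        neg_one_pow_congr' (by omega)
      rw [hs]
      simp
  have hL1 : Lsum (a + 1) (f + 1) = -Q - (-1) ^ (f + 3) := by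
    unfold Lsum
    simp only [show f + 1 - 1 = f from by omega, show a + 1 - 1 = a from by omega]
    rw [Finset.sum_range_succ']
    have hQ' : Q = ∑ k ∈ Finset.range f,
        (-1 : ℚ) ^ (f + k) * (f.choose (k + 1)) * ((k : ℚ) + 2) ^ a := by
      rw [hQ, Finset.sum_range_succ, Nat.choose_succ_self]
      simp
    rw [hQ', ← Finset.sum_neg_distrib, sub_eq_add_neg]
    congr 1
    · apply Finset.sum_congr rfl
      intro k _
      have hs : (-1 : ℚ) ^ (f + 1 + 1 + (k + 1)) = -(-1 : ℚ) ^ (f + k) := by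
        rw [neg_one_pow_congr' (a := f + 1 + 1 + (k + 1)) (b := f + k + 1) (by omega), pow_succ]
        ring
      rw [hs]
      push_cast
      ring
    · have hs : (-1 : ℚ) ^ (f + 1 + 1 + 0) = -(-1 : ℚ) ^ (f + 3) := by
        rw [neg_one_pow_congr' (a := f + 1 + 1 + 0) (b := f + 3 + 1) (by omega), pow_succ]
        ring
      rw [hs]
      simp
  have hMain : Lsum (a + 2) (f + 2) - Lsum (a + 1) (f + 2) = (f + 1) * N := by
    unfold Lsum
    simp only [show f + 2 - 1 = f + 1 from by omega, show a + 2 - 1 = a + 1 from by omega,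
      show a + 1 - 1 = a from by omega]
    rw [← Finset.sum_sub_distrib, Finset.sum_range_succ', hN, Finset.mul_sum]
    have hterm : ∀ k ∈ Finset.range (f + 1),
        ((-1 : ℚ) ^ (f + 2 + 1 + (k + 1)) * ((f + 1).choose (k + 1)) * (((k + 1 : ℕ) : ℚ) + 1) ^ (a + 1)
          - (-1 : ℚ) ^ (f + 2 + 1 + (k + 1)) * ((f + 1).choose (k + 1)) * (((k + 1 : ℕ) : ℚ) + 1) ^ a)
        = ((f : ℚ) + 1) * ((-1 : ℚ) ^ (f + k) * (f.choose k) * ((k : ℚ) + 2) ^ a) := by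
      intro k _
      have hs : (-1 : ℚ) ^ (f + 2 + 1 + (k + 1)) = (-1 : ℚ) ^ (f + k) :=
        neg_one_pow_congr' (by omega)
      have h1 : (f + 1) * f.choose k = (f + 1).choose (k + 1) * (k + 1) :=
        Nat.add_one_mul_choose_eq f k
      have h2 : ((f : ℚ) + 1) * (f.choose k) = ((f + 1).choose (k + 1)) * ((k : ℚ) + 1) := by
        exact_mod_cast congrArg (fun z : ℕ => (z : ℚ)) h1
      rw [hs]
      push_cast
      rw [pow_succ]
      linear_combination (-((-1 : ℚ) ^ (f + k)) * ((k : ℚ) + 2) ^ a) * h2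
    rw [Finset.sum_congr rfl hterm]
    norm_num
  rw [hL2, hL1]
  have := hMain
  rw [hL2] at this
  push_cast at this ⊢
  linarith

/-- Main combinatorial identity: `L n d = (d-1)! * S(n,d)` for `n, d ≥ 1`. -/
lemma Lsum_eq : ∀ n, 1 ≤ n → ∀ d, 1 ≤ d → Lsum n d = (d - 1)! * stirling n d := by
  intro n hn
  induction n, hn using Nat.le_induction with
  | base =>
    intro d hd
    match d, hd with
    | 1, _ => norm_num [Lsum_one, show stirling 1 1 = 1 from rfl]
    | (e + 2), _ =>
      rw [Lsum_base (e + 1), if_neg (by omega), stirling_eq_zero 1 (e + 2) (by omega)]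
      simp
  | succ n hn ih =>
    intro d hd
    match d, hd with
    | (e + 1), _ =>
      obtain ⟨a, rfl⟩ : ∃ a, n = a + 1 := ⟨n - 1, by omega⟩
      rw [Lsum_rec a e]
      rcases e with _ | f
      · rw [Lsum_zero, Lsum_one]
        rw [stirling_one_right (a + 1)]
        norm_num
      · rw [ih (f + 1 + 1) (by omega), ih (f + 1) (by omega)]
        have h1 : stirling (a + 1 + 1) (f + 1 + 1)
            = (f + 1 + 1) * stirling (a + 1) (f + 1 + 1) + stirling (a + 1) (f + 1) := rfl
        rw [h1]
        simp only [show f + 1 + 1 - 1 = f + 1 from by omega, show f + 1 - 1 = f from by omega]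
        rw [Nat.factorial_succ]
        push_cast
        ring

/-! ### Power series computations -/

/-- `gS i` is the power series `(1+X)^{-(i+1)}`. -/
noncomputable def gS (i : ℕ) : PowerSeries ℚ :=
  PowerSeries.mk fun k => (-1 : ℚ) ^ k * ((i + k).choose k)

lemma one_add_mul_gS_succ (i : ℕ) : (1 + X) * gS (i + 1) = gS i := by
  ext k
  rw [add_mul, one_mul, map_add]
  cases k with
  | zero =>
    rw [PowerSeries.coeff_zero_X_mul]
    simp [gS]
  | succ k =>
    rw [PowerSeries.coeff_succ_X_mul]
    simp only [gS, PowerSeries.coeff_mk]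
    rw [show i + 1 + (k + 1) = (i + (k + 1)) + 1 from by omega,
      Nat.choose_succ_succ (i + (k + 1)) k]
    rw [show i + (k + 1) = i + 1 + k from by omega]
    push_cast
    ring

lemma one_add_mul_gS_zero : (1 + X) * gS 0 = 1 := by
  ext k
  rw [add_mul, one_mul, map_add]
  cases k with
  | zero =>
    rw [PowerSeries.coeff_zero_X_mul]
    simp [gS]
  | succ k =>
    rw [PowerSeries.coeff_succ_X_mul]
    simp only [gS, PowerSeries.coeff_mk, PowerSeries.coeff_one]
    simp [Nat.choose_self, pow_succ]

lemma inv_one_add_eq : (1 + X : PowerSeries ℚ)⁻¹ = gS 0 := by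
  symm
  rw [PowerSeries.eq_inv_iff_mul_eq_one (by simp)]
  rw [mul_comm]
  exact one_add_mul_gS_zero

lemma gS_pow : ∀ i : ℕ, gS 0 ^ (i + 1) = gS i := by
  intro i
  induction i with
  | zero => rw [pow_one]
  | succ i ih =>
    rw [pow_succ, ih, ← one_add_mul_gS_succ i, mul_comm (1 + X), mul_assoc,
      one_add_mul_gS_zero, mul_one]

lemma coeff_term (d i : ℕ) (h1 : 1 ≤ i) (h2 : i ≤ d) :
    PowerSeries.coeff d ((X * (1 + X : PowerSeries ℚ)⁻¹) ^ i)
      = (-1 : ℚ) ^ (d - i) * ((d - 1).choose (d - i)) := by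
  obtain ⟨j, rfl⟩ : ∃ j, i = j + 1 := ⟨i - 1, by omega⟩
  obtain ⟨k, rfl⟩ : ∃ k, d = k + (j + 1) := ⟨d - (j + 1), by omega⟩
  rw [inv_one_add_eq, mul_pow, gS_pow j, PowerSeries.coeff_X_pow_mul]
  simp only [gS, PowerSeries.coeff_mk]
  rw [show k + (j + 1) - (j + 1) = k from by omega,
    show k + (j + 1) - 1 = j + k from by omega]

lemma coeff_Pseries (n d : ℕ) : PowerSeries.coeff d (Pseries n) = Lsum n d := by
  rw [Pseries, PowerSeries.coeff_mk]
  rw [← Finset.Ico_add_one_right_eq_Icc, Finset.sum_Ico_eq_sum_range,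
    show d + 1 - 1 = d from rfl]
  unfold Lsum
  apply Finset.sum_congr rfl
  intro j hj
  rw [Finset.mem_range] at hj
  rw [coeff_term d (1 + j) (by omega) (by omega)]
  rw [show d - (1 + j) = (d - 1) - j from by omega,
    Nat.choose_symm (show j ≤ d - 1 from by omega)]
  have hs : (-1 : ℚ) ^ (d - 1 - j) = (-1 : ℚ) ^ (d + 1 + j) :=
    neg_one_pow_congr' (by omega)
  rw [hs]
  push_cast
  ring

/-- for n ≥ 1, P_n(u) = ∑_{i≥1} i^(n-1)(u/(1+u))^i is a polynomial of
degree n; precisely P_n(u) = ∑_{m=1}^n (m-1)! S(n,m) u^m. -/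
theorem stmt_1 (n : ℕ) (hn : 1 ≤ n) :
    Pseries n = ∑ m ∈ Finset.Icc 1 n, ((m - 1)! * stirling n m : ℚ) • (X : PowerSeries ℚ) ^ m := by
  ext d
  rw [coeff_Pseries n d, map_sum]
  have hR : ∀ m ∈ Finset.Icc 1 n,
      PowerSeries.coeff d (((m - 1)! * stirling n m : ℚ) • (X : PowerSeries ℚ) ^ m)
        = if d = m then ((m - 1)! * stirling n m : ℚ) else 0 := by
    intro m _
    rw [PowerSeries.coeff_smul, PowerSeries.coeff_X_pow, smul_eq_mul]
    split <;> simp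
  rw [Finset.sum_congr rfl hR, Finset.sum_ite_eq]
  rcases Nat.eq_zero_or_pos d with hd | hd
  · subst hd
    rw [Lsum_zero, if_neg (by simp)]
  · rw [Lsum_eq n hn d hd]
    by_cases hdn : d ≤ n
    · rw [if_pos (Finset.mem_Icc.mpr ⟨hd, hdn⟩)]
    · rw [if_neg (by simp only [Finset.mem_Icc]; omega), stirling_eq_zero n d (by omega)]
      simp
end

section
/- For every n > 1, the polynomial P_n(u) = ∑_{m=1}^n (m-1)! * S(n,m) * u^m satisfies P_n(-1) = 0, i.e., ∑_{m=1}^n (-1)^m * (m-1)! * S(n,m) = 0. -/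
open Nat

/-! Put `g m = (-1)^m m! S(n - 1, m)`. The recurrence `S(n, m) = m S(n - 1, m) + S(n - 1, m - 1)`
turns the summand `(-1)^m (m - 1)! S(n, m)` into `g m - g (m - 1)`, so the sum telescopes to
`g n - g 0`, and for `n ≥ 2` both ends vanish: `S(n - 1, n) = 0` and `S(n - 1, 0) = 0`. -/

lemma stirling_eq_zero_of_lt {n m : ℕ} (h : n < m) : stirling n m = 0 := by
  induction n generalizing m with
  | zero => obtain ⟨m, rfl⟩ := Nat.exists_eq_succ_of_ne_zero (by omega : m ≠ 0); rfl
  | succ n ih =>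
    obtain ⟨m, rfl⟩ := Nat.exists_eq_succ_of_ne_zero (by omega : m ≠ 0)
    simp [stirling, ih (by omega : n < m + 1), ih (by omega : n < m)]

lemma neg_one_pow_mul_factorial_mul_stirling_succ_succ (n m : ℕ) :
    (-1 : ℤ) ^ (m + 1) * m ! * stirling (n + 1) (m + 1) =
      (-1) ^ (m + 1) * (m + 1)! * stirling n (m + 1) - (-1) ^ m * m ! * stirling n m := by
  simp only [stirling, factorial_succ]
  push_cast
  ring

lemma sum_neg_one_pow_mul_factorial_mul_stirling_succ (n N : ℕ) :
    ∑ m ∈ Finset.Icc 1 N, (-1 : ℤ) ^ m * (m - 1)! * stirling (n + 1) m =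
      (-1) ^ N * N ! * stirling n N - stirling n 0 := by
  induction N with
  | zero => simp
  | succ N ih =>
    rw [Finset.sum_Icc_succ_top (by omega), ih, Nat.add_sub_cancel,
      neg_one_pow_mul_factorial_mul_stirling_succ_succ]
    ring

/-- for n ≥ 2, P_n(-1) = 0, i.e. ∑_{m=1}^n (-1)^m (m-1)! S(n,m) = 0. -/
theorem stmt_2 (n : ℕ) (hn : 2 ≤ n) :
    ∑ m ∈ Finset.Icc 1 n, (-1 : ℤ) ^ m * (m - 1)! * stirling n m = 0 := by
  obtain ⟨k, rfl⟩ : ∃ k, n = k + 2 := ⟨n - 2, by omega⟩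
  rw [sum_neg_one_pow_mul_factorial_mul_stirling_succ, stirling_eq_zero_of_lt (by omega)]
  simp [stirling]
end

section
/- For integers m, n ≥ 1, the residue at x = 0 of x^(m-1)/(log(1+x))^n dx, i.e., the coefficient of x^(-1) in the formal Laurent series x^(m-1)/(log(1+x))^n, equals (m-1)! * S(n,m) / (n-1)!, where S(n,m) is the Stirling number of the second kind. -/
open Nat

/-- The formal power series log(1+x) = ∑_{k≥1} (-1)^(k-1) x^k / k over ℚ. -/
noncomputable def logOnePlus : PowerSeries ℚ :=
  PowerSeries.mk fun k => if k = 0 then 0 else (-1 : ℚ) ^ (k - 1) / k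

/-- log(1+x) viewed as a formal Laurent series in ℚ⸨x⸩. -/
noncomputable def logL : LaurentSeries ℚ := (logOnePlus : LaurentSeries ℚ)

/-- x as a Laurent series. -/
noncomputable def xL : LaurentSeries ℚ := ((PowerSeries.X : PowerSeries ℚ) : LaurentSeries ℚ)

/-! Write `log(1+x) = x u` with `u(0) = 1` and put `v = u⁻¹`; then the residue of
`x^(m-1) / log(1+x)^n` is the coefficient of `x^(n-m)` in `v^n`. From `(1+x) (x u)' = 1` one gets
the Riccati-type equation `(1+x) (v - x v') = v²`, hence `(1+x) (N v^N - x (v^N)') = N v^(N+1)`.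
Comparing coefficients, `(N-1)! [x^k] v^N` satisfies the recurrence of `(N-1-k)! S(N, N-k)`. -/

theorem stirling_eq_stirlingSecond : stirling = Nat.stirlingSecond := by
  funext n m
  induction n generalizing m with
  | zero => cases m <;> rfl
  | succ n ih => cases m <;> simp [stirling, Nat.stirlingSecond, ih]

open PowerSeries

section

variable {R : Type*} [CommRing R]

theorem coeff_natCast_mul_sub_X_mul_derivative (N k : ℕ) (f : R⟦X⟧) :
    coeff k ((N : R⟦X⟧) * f - X * d⁄dX R f) = (N - k) * coeff k f := by
  rw [map_sub, ← map_natCast (C (R := R)), coeff_C_mul]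
  cases k with
  | zero => simp
  | succ k =>
    rw [coeff_succ_X_mul, coeff_derivative]
    push_cast
    ring

theorem one_add_X_mul_natCast_mul_pow_sub_X_mul_derivative {w : R⟦X⟧}
    (hw : (1 + X) * (w - X * d⁄dX R w) = w ^ 2) (N : ℕ) :
    (1 + X) * ((N : R⟦X⟧) * w ^ N - X * d⁄dX R (w ^ N)) = (N : R⟦X⟧) * w ^ (N + 1) := by
  cases N with
  | zero => simp
  | succ N =>
    rw [derivative_pow, add_tsub_cancel_right]
    push_cast
    linear_combination ((N + 1 : R⟦X⟧) * w ^ N) * hw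

theorem coeff_pow_recurrence {w : R⟦X⟧}
    (hw : (1 + X) * (w - X * d⁄dX R w) = w ^ 2) (N k : ℕ) :
    (N : R) * coeff (k + 1) (w ^ (N + 1)) =
      (N - (k + 1 : ℕ)) * coeff (k + 1) (w ^ N) + (N - k) * coeff k (w ^ N) := by
  have h := congrArg (coeff (k + 1)) (one_add_X_mul_natCast_mul_pow_sub_X_mul_derivative hw N)
  rw [add_mul, one_mul, map_add, coeff_succ_X_mul, coeff_natCast_mul_sub_X_mul_derivative,
    coeff_natCast_mul_sub_X_mul_derivative, ← map_natCast (C (R := R)), coeff_C_mul] at h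
  exact h.symm

theorem factorial_mul_coeff_pow {w : R⟦X⟧} (h0 : constantCoeff w = 1)
    (hw : (1 + X) * (w - X * d⁄dX R w) = w ^ 2) (a b : ℕ) :
    ((a + b)! : R) * coeff a (w ^ (a + b + 1)) = b ! * stirlingSecond (a + b + 1) (b + 1) := by
  suffices ∀ s a b, a + b = s →
      ((a + b)! : R) * coeff a (w ^ (a + b + 1)) = b ! * stirlingSecond (a + b + 1) (b + 1) from
    this _ a b rfl
  intro s
  -- The case `(a + 1, b)` needs `(a, b)` and `(a + 1, b - 1)`, both of total `s`.
  induction s with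
  | zero =>
    rintro a b hab
    obtain ⟨rfl, rfl⟩ : a = 0 ∧ b = 0 := by omega
    simp [h0, stirlingSecond_self]
  | succ s ih =>
    rintro (_ | a) b hab
    · simp [coeff_zero_eq_constantCoeff, h0, stirlingSecond_self]
    have hlow : ((a + b)! : R) * b * coeff (a + 1) (w ^ (a + b + 1)) =
        b ! * stirlingSecond (a + b + 1) b := by
      cases b with
      | zero => simp
      | succ b =>
        have := ih (a + 1) b (by omega)
        rw [show a + 1 + b = a + (b + 1) by ring] at this
        rw [mul_right_comm, this, stirlingSecond_succ_succ, factorial_succ]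
        push_cast
        ring
    have hrec := coeff_pow_recurrence hw (a + b + 1) a
    rw [show a + 1 + b + 1 = a + b + 1 + 1 by ring, show a + 1 + b = a + b + 1 by ring,
      factorial_succ, stirlingSecond_succ_succ]
    push_cast at hrec ⊢
    linear_combination ((a + b)! : R) * hrec + hlow + (b + 1 : R) * ih a b (by omega)

end

noncomputable def logOnePlusDivX : ℚ⟦X⟧ :=
  mk fun k => (-1 : ℚ) ^ k / (k + 1)

theorem logOnePlus_eq_X_mul : logOnePlus = X * logOnePlusDivX := by
  ext (_ | k)
  · simp [logOnePlus]
  · rw [coeff_succ_X_mul]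
    simp [logOnePlus, logOnePlusDivX]

theorem constantCoeff_logOnePlusDivX : constantCoeff logOnePlusDivX = 1 := by
  simp [logOnePlusDivX]

theorem constantCoeff_inv_logOnePlusDivX : constantCoeff logOnePlusDivX⁻¹ = 1 := by
  rw [constantCoeff_inv, constantCoeff_logOnePlusDivX, inv_one]

theorem logOnePlusDivX_mul_inv : logOnePlusDivX * logOnePlusDivX⁻¹ = 1 :=
  PowerSeries.mul_inv_cancel _ (by rw [constantCoeff_logOnePlusDivX]; exact one_ne_zero)

theorem one_add_X_mul_derivative_logOnePlus : (1 + X) * d⁄dX ℚ logOnePlus = 1 := by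
  have hd : d⁄dX ℚ logOnePlus = mk fun k => (-1 : ℚ) ^ k := by
    ext k
    rw [coeff_derivative]
    simp [logOnePlus]
    field_simp
  ext (_ | k)
  · simp [hd]
  · rw [hd, add_mul, one_mul, map_add, coeff_succ_X_mul]
    simp [pow_succ]

theorem one_add_X_mul_inv_logOnePlusDivX_sub_X_mul_derivative :
    (1 + X) * (logOnePlusDivX⁻¹ - X * d⁄dX ℚ logOnePlusDivX⁻¹) = logOnePlusDivX⁻¹ ^ 2 := by
  have hlog : (1 + X) * (logOnePlusDivX + X * d⁄dX ℚ logOnePlusDivX) = 1 := by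
    have h := one_add_X_mul_derivative_logOnePlus
    rw [logOnePlus_eq_X_mul, Derivation.leibniz, derivative_X, smul_eq_mul, smul_eq_mul] at h
    linear_combination h
  rw [derivative_inv']
  linear_combination
    logOnePlusDivX⁻¹ ^ 2 * hlog - (1 + X) * logOnePlusDivX⁻¹ * logOnePlusDivX_mul_inv

theorem logL_eq_single_mul :
    logL = HahnSeries.single 1 1 * (logOnePlusDivX : LaurentSeries ℚ) := by
  rw [logL, logOnePlus_eq_X_mul, coe_mul, coe_X]

theorem inv_logL_pow (n : ℕ) :
    (logL ^ n)⁻¹ =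
      HahnSeries.single (-n : ℤ) 1 * ((logOnePlusDivX⁻¹ ^ n : ℚ⟦X⟧) : LaurentSeries ℚ) := by
  refine inv_eq_of_mul_eq_one_right ?_
  rw [logL_eq_single_mul, mul_pow, HahnSeries.single_pow, mul_mul_mul_comm,
    HahnSeries.single_mul_single, ← coe_pow, ← coe_mul, ← mul_pow, logOnePlusDivX_mul_inv]
  simp

theorem coeff_neg_one_xL_pow_mul_inv_logL_pow (j n : ℕ) :
    (xL ^ j * (logL ^ n)⁻¹).coeff (-1) =
      if n ≤ j then 0 else coeff (n - j - 1) (logOnePlusDivX⁻¹ ^ n) := by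
  rw [inv_logL_pow, xL, ← coe_pow, HahnSeries.ofPowerSeries_X_pow, ← mul_assoc,
    HahnSeries.single_mul_single, one_mul, show (-1 : ℤ) = (n - j - 1 : ℤ) + (j + -n) by ring,
    HahnSeries.coeff_single_mul_add, one_mul, coeff_coe]
  split_ifs <;> first | rfl | omega | congr 2; omega

theorem stmt_8_general (m n : ℕ) (hm : 1 ≤ m) :
    (xL ^ (m - 1) * (logL ^ n)⁻¹).coeff (-1) =
      ((m - 1)! * stirling n m : ℚ) / (n - 1)! := by
  rw [coeff_neg_one_xL_pow_mul_inv_logL_pow, stirling_eq_stirlingSecond]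
  split_ifs with hnm
  · rw [stirlingSecond_eq_zero_of_lt (by omega)]
    simp
  obtain ⟨a, b, rfl, rfl⟩ : ∃ a b, n = a + b + 1 ∧ m = b + 1 :=
    ⟨n - m, m - 1, by omega, by omega⟩
  rw [show a + b + 1 - (b + 1 - 1) - 1 = a by omega, add_tsub_cancel_right, add_tsub_cancel_right,
    eq_div_iff (by positivity), mul_comm,
    factorial_mul_coeff_pow constantCoeff_inv_logOnePlusDivX
      one_add_X_mul_inv_logOnePlusDivX_sub_X_mul_derivative]

/-- for m, n ≥ 1 the residue at x = 0 of x^(m-1)/(log(1+x))^n, i.e. the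
coefficient of x^(-1), equals (m-1)! S(n,m)/(n-1)!. -/
theorem stmt_8 (m n : ℕ) (hm : 1 ≤ m) (hn : 1 ≤ n) :
    (xL ^ (m - 1) * (logL ^ n)⁻¹).coeff (-1) =
      ((m - 1)! * stirling n m : ℚ) / (n - 1)! :=
  stmt_8_general m n hm
end

section
/- The change-of-variables identity for residues: for m, n ≥ 1, Res_{t=0}[ e^t (e^t - 1)^(m-1) / t^n dt ] = Res_{x=0}[ x^(m-1) / (log(1+x))^n dx ]; concretely, the coefficient of t^(n-1) in e^t (e^t-1)^(m-1) equals the coefficient of x^(-1) in x^(m-1)/(log(1+x))^n. -/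
open Nat

namespace Stmt9Aux
open PowerSeries Finset

/-- the unit power series with logOnePlus = X * uu -/
noncomputable def uu : PowerSeries ℚ := PowerSeries.mk fun k => (-1 : ℚ) ^ k / (k + 1)

lemma const_uu : constantCoeff (R := ℚ) uu = 1 := by
  simp [uu, ← coeff_zero_eq_constantCoeff]

lemma L_eq : logOnePlus = X * uu := by
  ext n
  cases n with
  | zero => simp [logOnePlus]
  | succ k => simp [logOnePlus, coeff_succ_X_mul, uu, Nat.cast_add]

noncomputable def ww : PowerSeries ℚ := uu⁻¹

noncomputable def vv : PowerSeries ℚ := (1 + X : PowerSeries ℚ)⁻¹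

lemma const_oneX : constantCoeff (R := ℚ) (1 + X) = 1 := by simp

lemma uu_ww : uu * ww = 1 := PowerSeries.mul_inv_cancel _ (by rw [const_uu]; norm_num)

lemma oneX_vv : (1 + X) * vv = 1 := PowerSeries.mul_inv_cancel _ (by rw [const_oneX]; norm_num)

lemma coeff_dL (n : ℕ) : coeff (R := ℚ) n (PowerSeries.derivative ℚ logOnePlus) = (-1) ^ n := by
  rw [coeff_derivative]
  simp only [logOnePlus, coeff_mk, Nat.succ_ne_zero, if_false, Nat.add_sub_cancel]
  have : ((n : ℚ) + 1) ≠ 0 := by positivity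
  push_cast
  field_simp

lemma dL : PowerSeries.derivative ℚ logOnePlus = vv := by
  have h : (1 + X) * PowerSeries.derivative ℚ logOnePlus = 1 := by
    ext n
    cases n with
    | zero =>
      simp [add_mul, coeff_dL, coeff_zero_X_mul, ← coeff_zero_eq_constantCoeff]
    | succ k =>
      simp [add_mul, coeff_dL, coeff_succ_X_mul, pow_succ]
  calc PowerSeries.derivative ℚ logOnePlus
      = (vv * (1 + X)) * PowerSeries.derivative ℚ logOnePlus := by
        rw [mul_comm vv, oneX_vv, one_mul]
    _ = vv * ((1 + X) * PowerSeries.derivative ℚ logOnePlus) := by ring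
    _ = vv := by rw [h, mul_one]

end Stmt9Aux

namespace Stmt9Aux
open PowerSeries Finset

lemma hw : PowerSeries.derivative ℚ ww = -(ww ^ 2) * PowerSeries.derivative ℚ uu := by
  show PowerSeries.derivative ℚ (uu⁻¹) = -(uu⁻¹ ^ 2) * PowerSeries.derivative ℚ uu
  exact PowerSeries.derivative_inv' uu

lemma hE : uu + X * PowerSeries.derivative ℚ uu = vv := by
  have h := dL
  rw [L_eq, Derivation.leibniz] at h
  simp only [PowerSeries.derivative_X, smul_eq_mul, mul_one] at h
  linear_combination h

lemma uw (j : ℕ) : uu * ww ^ (j + 1) = ww ^ j := by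
  linear_combination ww ^ j * uu_ww

lemma keyB (i : ℕ) :
    ww ^ (i+1) + X * (PowerSeries.derivative ℚ uu * ww ^ (i+2)) = ww ^ (i+2) * vv := by
  linear_combination ww ^ (i+2) * hE - uw (i+1)

lemma h5 (i : ℕ) : PowerSeries.derivative ℚ (ww ^ (i+1)) =
    -((i+1 : ℕ) • (PowerSeries.derivative ℚ uu * ww ^ (i+2))) := by
  have := Derivation.leibniz_pow (D := PowerSeries.derivative ℚ) (a := ww) (i+1)
  simp only [Nat.add_sub_cancel] at this
  rw [this, hw]
  rw [show ww ^ i • (-(ww ^ 2) * PowerSeries.derivative ℚ uu)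
      = -(PowerSeries.derivative ℚ uu * ww ^ (i+2)) from by rw [smul_eq_mul]; ring]
  rw [smul_neg]

lemma lemB_succ (i : ℕ) : coeff (R := ℚ) (i+1) (ww ^ (i+2) * vv) = 0 := by
  have hkey := congrArg (coeff (R := ℚ) (i+1)) (keyB i)
  rw [map_add, coeff_succ_X_mul] at hkey
  have h6 := congrArg (coeff (R := ℚ) i) (h5 i)
  rw [coeff_derivative, map_neg, map_nsmul, nsmul_eq_mul] at h6
  have hne : ((i : ℚ) + 1) ≠ 0 := by positivity
  push_cast at h6
  rw [← hkey]
  have : coeff (R := ℚ) i (PowerSeries.derivative ℚ uu * ww ^ (i+2))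
      = -(coeff (R := ℚ) (i+1) (ww ^ (i+1))) := by
    have h7 := mul_left_cancel₀ hne (show ((i:ℚ)+1) * coeff (R := ℚ) i (PowerSeries.derivative ℚ uu * ww ^ (i+2)) = ((i:ℚ)+1) * (-(coeff (R := ℚ) (i+1) (ww ^ (i+1)))) from by linear_combination h6)
    exact h7
  rw [this]; ring

lemma lemB0 : coeff (R := ℚ) 0 (ww * vv) = 1 := by
  rw [coeff_zero_eq_constantCoeff, map_mul]
  have h1 : constantCoeff (R := ℚ) ww = 1 := by
    show constantCoeff (R := ℚ) uu⁻¹ = 1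
    rw [PowerSeries.constantCoeff_inv, const_uu]; norm_num
  have h2 : constantCoeff (R := ℚ) vv = 1 := by
    show constantCoeff (R := ℚ) (1 + X : ℚ⟦X⟧)⁻¹ = 1
    rw [PowerSeries.constantCoeff_inv, const_oneX]; norm_num
  rw [h1, h2]; norm_num

end Stmt9Aux

namespace Stmt9Aux
open PowerSeries Finset

lemma L_pow (k : ℕ) : logOnePlus ^ k = X ^ k * uu ^ k := by rw [L_eq, mul_pow]

lemma coeff_L_pow_zero {N k : ℕ} (h : N < k) : coeff (R := ℚ) N (logOnePlus ^ k) = 0 := by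
  rw [L_pow]
  exact (X_pow_dvd_iff.mp ⟨uu ^ k, rfl⟩) N h

lemma dLpow (k : ℕ) :
    (1 + X) * PowerSeries.derivative ℚ (logOnePlus ^ (k+1)) = (k+1 : ℕ) • logOnePlus ^ k := by
  have h := Derivation.leibniz_pow (D := PowerSeries.derivative ℚ) (a := logOnePlus) (k+1)
  simp only [Nat.add_sub_cancel, dL, smul_eq_mul] at h
  rw [h, mul_smul_comm]
  congr 1
  linear_combination logOnePlus ^ k * oneX_vv

/-- partial sums of the composition exp(c log(1+x)) -/
noncomputable def Sc (c N : ℕ) : ℚ :=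
  ∑ k ∈ range (N+1), (c:ℚ)^k / k.factorial * coeff (R := ℚ) N (logOnePlus ^ k)

lemma coeffrec (k N : ℕ) :
    ((N:ℚ)+1) * coeff (R := ℚ) (N+1) (logOnePlus ^ (k+1)) + (N:ℚ) * coeff (R := ℚ) N (logOnePlus ^ (k+1))
      = ((k:ℚ)+1) * coeff (R := ℚ) N (logOnePlus ^ k) := by
  have h := congrArg (coeff (R := ℚ) N) (dLpow k)
  rw [map_nsmul, nsmul_eq_mul] at h
  push_cast at h
  cases N with
  | zero =>
    rw [add_mul, one_mul, map_add] at h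
    simp only [coeff_zero_X_mul, add_zero, coeff_derivative, Nat.cast_zero] at h
    push_cast at h
    linear_combination h
  | succ M =>
    rw [add_mul, one_mul, map_add, coeff_succ_X_mul, coeff_derivative, coeff_derivative] at h
    push_cast at h ⊢
    linear_combination h

lemma ncoeffone (N : ℕ) : (N:ℚ) * coeff (R := ℚ) N (1 : ℚ⟦X⟧) = 0 := by
  cases N <;> simp [coeff_one]

lemma recS (c N : ℕ) : ((N:ℚ)+1) * Sc c (N+1) = ((c:ℚ) - N) * Sc c N := by
  have hsum := Finset.sum_congr rfl
    (fun k (_ : k ∈ range (N+1)) => congrArg (fun q => (c:ℚ)^(k+1) / (k+1).factorial * q)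
      (coeffrec k N))
  have A1 : ((N:ℚ)+1) * Sc c (N+1)
      = ∑ k ∈ range (N+1), (c:ℚ)^(k+1) / (k+1).factorial
          * (((N:ℚ)+1) * coeff (R := ℚ) (N+1) (logOnePlus ^ (k+1))) := by
    rw [Sc, Finset.sum_range_succ']
    rw [show coeff (R := ℚ) (N+1) (logOnePlus ^ (0:ℕ)) = 0 from by simp [coeff_one]]
    rw [mul_zero, add_zero, Finset.mul_sum]
    exact Finset.sum_congr rfl fun k _ => by ring
  have A2 : (N:ℚ) * Sc c N
      = ∑ k ∈ range (N+1), (c:ℚ)^(k+1) / (k+1).factorial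
          * ((N:ℚ) * coeff (R := ℚ) N (logOnePlus ^ (k+1))) := by
    rw [Finset.sum_range_succ]
    rw [coeff_L_pow_zero (Nat.lt_succ_self N), mul_zero, mul_zero, add_zero]
    rw [Sc, Finset.sum_range_succ', mul_add, Finset.mul_sum]
    rw [show (c:ℚ)^(0:ℕ) / (Nat.factorial 0 : ℚ) * coeff (R := ℚ) N (logOnePlus ^ (0:ℕ))
        = coeff (R := ℚ) N (1 : ℚ⟦X⟧) from by simp]
    rw [ncoeffone N, add_zero]
    exact Finset.sum_congr rfl fun k _ => by ring
  have T3 : ∑ k ∈ range (N+1), (c:ℚ)^(k+1) / (k+1).factorial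
        * (((k:ℚ)+1) * coeff (R := ℚ) N (logOnePlus ^ k))
      = (c:ℚ) * Sc c N := by
    rw [Sc, Finset.mul_sum]
    refine Finset.sum_congr rfl fun k _ => ?_
    have hf : ((k+1).factorial : ℚ) = ((k:ℚ)+1) * (k.factorial : ℚ) := by
      rw [Nat.factorial_succ]; push_cast; ring
    have h1 : ((k:ℚ)+1) ≠ 0 := by positivity
    have h2 : (k.factorial : ℚ) ≠ 0 := by exact_mod_cast k.factorial_ne_zero
    rw [hf]
    field_simp
    ring
  simp only [mul_add] at hsum
  rw [Finset.sum_add_distrib, ← A1, ← A2, T3] at hsum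
  linarith [hsum]

lemma recf (c N : ℕ) (hc : 1 ≤ c) :
    ((N:ℚ)+1) * coeff (R := ℚ) (N+1) ((1+X : ℚ⟦X⟧)^c) + (N:ℚ) * coeff (R := ℚ) N ((1+X : ℚ⟦X⟧)^c)
      = (c:ℚ) * coeff (R := ℚ) N ((1+X : ℚ⟦X⟧)^c) := by
  obtain ⟨d, rfl⟩ : ∃ d, c = d + 1 := ⟨c - 1, by omega⟩
  have h := Derivation.leibniz_pow (D := PowerSeries.derivative ℚ) (a := (1+X : ℚ⟦X⟧)) (d+1)
  simp only [Nat.add_sub_cancel, map_add, PowerSeries.derivative_X, smul_eq_mul, mul_one] at h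
  have h0 : PowerSeries.derivative ℚ (1 : ℚ⟦X⟧) = 0 := by
    simpa using (PowerSeries.derivative ℚ).map_one_eq_zero
  rw [h0, zero_add] at h
  have h2 : (1 + X) * PowerSeries.derivative ℚ ((1+X : ℚ⟦X⟧)^(d+1))
      = (d+1 : ℕ) • (1+X : ℚ⟦X⟧)^(d+1) := by
    rw [h, mul_smul_comm]
    congr 1
    ring
  have h3 := congrArg (coeff (R := ℚ) N) h2
  rw [map_nsmul, nsmul_eq_mul] at h3
  push_cast at h3
  cases N with
  | zero =>
    rw [add_mul, one_mul, map_add] at h3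
    simp only [coeff_zero_X_mul, add_zero, coeff_derivative, Nat.cast_zero] at h3
    push_cast at h3 ⊢
    linear_combination h3
  | succ M =>
    rw [add_mul, one_mul, map_add, coeff_succ_X_mul, coeff_derivative, coeff_derivative] at h3
    push_cast at h3 ⊢
    linear_combination h3

lemma lemD (c : ℕ) (hc : 1 ≤ c) (N : ℕ) : coeff (R := ℚ) N ((1+X : ℚ⟦X⟧)^c) = Sc c N := by
  induction N with
  | zero =>
    rw [Sc]
    simp only [zero_add, range_one, Finset.sum_singleton, pow_zero, Nat.factorial_zero,
      Nat.cast_one, div_one, one_mul]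
    rw [coeff_zero_eq_constantCoeff, map_pow, const_oneX, one_pow]
    simp [coeff_one]
  | succ N ih =>
    have h1 := recf c N hc
    have h2 := recS c N
    rw [ih] at h1
    have hne : ((N:ℚ)+1) ≠ 0 := by positivity
    apply mul_left_cancel₀ hne
    rw [h2]
    linarith [h1]

end Stmt9Aux

namespace Stmt9Aux
open PowerSeries Finset

lemma lemB (i : ℕ) : coeff (R := ℚ) i (ww ^ (i+1) * vv) = if i = 0 then 1 else 0 := by
  cases i with
  | zero => rw [pow_one]; simpa using lemB0
  | succ j => simpa using lemB_succ j

lemma binom_X (M : ℕ) : (X : ℚ⟦X⟧)^M * (1+X) =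
    ∑ j ∈ range (M+1), ((-1:ℚ)^(j+M) * (M.choose j : ℚ)) • ((1+X : ℚ⟦X⟧)^(j+1)) := by
  have h := sub_pow (1+X : ℚ⟦X⟧) 1 M
  rw [add_sub_cancel_left] at h
  rw [h, Finset.sum_mul]
  refine Finset.sum_congr rfl fun j _ => ?_
  rw [smul_eq_C_mul, map_mul, map_pow, map_neg, map_one, map_natCast, one_pow]
  ring

lemma coeff_A (M k : ℕ) : coeff (R := ℚ) k (exp ℚ * (exp ℚ - 1)^M) =
    ∑ j ∈ range (M+1), ((-1:ℚ)^(j+M) * (M.choose j : ℚ)) * (((j:ℚ)+1)^k / k.factorial) := by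
  rw [sub_pow (exp ℚ) 1 M, Finset.mul_sum, map_sum]
  refine Finset.sum_congr rfl fun j _ => ?_
  have h1 : exp ℚ * ((-1:ℚ⟦X⟧)^(j+M) * exp ℚ ^ j * 1^(M-j) * ↑(M.choose j))
      = ((-1:ℚ)^(j+M) * (M.choose j : ℚ)) • (exp ℚ)^(j+1) := by
    rw [smul_eq_C_mul, map_mul, map_pow, map_neg, map_one, map_natCast, one_pow]
    ring
  rw [h1, map_smul, smul_eq_mul, exp_pow_eq_rescale_exp, coeff_rescale, coeff_exp]
  have : (algebraMap ℚ ℚ) (1 / (k.factorial : ℚ)) = 1 / (k.factorial : ℚ) := by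
    simp
  rw [this]
  push_cast
  ring

lemma hC (M N : ℕ) : coeff (R := ℚ) N ((X:ℚ⟦X⟧)^M * (1+X)) =
    ∑ k ∈ range (N+1), coeff (R := ℚ) k (exp ℚ * (exp ℚ - 1)^M) * coeff (R := ℚ) N (logOnePlus ^ k) := by
  have hb := congrArg (coeff (R := ℚ) N) (binom_X M)
  rw [map_sum] at hb
  simp only [map_smul, smul_eq_mul] at hb
  have hb2 : ∀ j ∈ range (M+1),
      ((-1:ℚ)^(j+M) * (M.choose j : ℚ)) * coeff (R := ℚ) N ((1+X : ℚ⟦X⟧)^(j+1))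
      = ∑ k ∈ range (N+1), ((-1:ℚ)^(j+M) * (M.choose j : ℚ))
          * ((((j:ℚ)+1))^k / k.factorial * coeff (R := ℚ) N (logOnePlus ^ k)) := by
    intro j _
    rw [lemD (j+1) (Nat.le_add_left 1 j), Sc, Finset.mul_sum]
    refine Finset.sum_congr rfl fun k _ => ?_
    push_cast
    ring
  rw [Finset.sum_congr rfl hb2, Finset.sum_comm] at hb
  rw [hb]
  refine Finset.sum_congr rfl fun k _ => ?_
  rw [coeff_A, Finset.sum_mul]
  refine Finset.sum_congr rfl fun j _ => ?_
  ring

lemma uupow_ww (k j : ℕ) : uu^k * ww^(k+j) = ww^j := by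
  have h : uu^k * ww^k = 1 := by rw [← mul_pow, uu_ww, one_pow]
  rw [pow_add, ← mul_assoc, h, one_mul]

lemma mainPS (M N : ℕ) :
    coeff (R := ℚ) N (exp ℚ * (exp ℚ - 1)^M) = coeff (R := ℚ) N ((X:ℚ⟦X⟧)^M * ww^(N+1)) := by
  set n := N + 1 with hn
  set P : ℚ⟦X⟧ := ∑ k ∈ range n, (coeff (R := ℚ) k (exp ℚ * (exp ℚ - 1)^M)) • logOnePlus^k with hP
  have hcoeffP : ∀ J, J < n → coeff (R := ℚ) J P = coeff (R := ℚ) J ((X:ℚ⟦X⟧)^M * (1+X)) := by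
    intro J hJ
    rw [hP, map_sum]
    simp only [map_smul, smul_eq_mul]
    rw [hC M J]
    symm
    apply Finset.sum_subset
    · intro x hx
      rw [Finset.mem_range] at hx ⊢
      omega
    · intro x _ hx
      rw [Finset.mem_range, not_lt] at hx
      rw [coeff_L_pow_zero (by omega), mul_zero]
  have hdvd : (X:ℚ⟦X⟧)^n ∣ (X:ℚ⟦X⟧)^M * (1+X) - P := by
    rw [X_pow_dvd_iff]
    intro J hJ
    rw [map_sub, hcoeffP J hJ, sub_self]
  obtain ⟨ρ, hρ⟩ := hdvd
  have hρ' : (X:ℚ⟦X⟧)^M * (1+X) = P + X^n * ρ := by linear_combination hρ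
  have heq : (X:ℚ⟦X⟧)^M * ww^n = P * (vv * ww^n) + X^n * (ρ * (vv * ww^n)) := by
    linear_combination (vv * ww^n) * hρ' - ((X:ℚ⟦X⟧)^M * ww^n) * oneX_vv
  rw [heq, map_add]
  have hz : coeff (R := ℚ) N ((X:ℚ⟦X⟧)^n * (ρ * (vv * ww^n))) = 0 :=
    X_pow_dvd_iff.mp ⟨_, rfl⟩ N (by omega)
  rw [hz, add_zero, hP, Finset.sum_mul, map_sum]
  have hterm : ∀ k ∈ range n,
      coeff (R := ℚ) N ((coeff (R := ℚ) k (exp ℚ * (exp ℚ - 1)^M)) • logOnePlus^k * (vv * ww^n))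
      = if k = N then coeff (R := ℚ) k (exp ℚ * (exp ℚ - 1)^M) else 0 := by
    intro k hk
    rw [Finset.mem_range] at hk
    have hkN : k ≤ N := by omega
    rw [smul_mul_assoc, map_smul, smul_eq_mul]
    have h2 : logOnePlus^k * (vv * ww^n) = X^k * (ww^(N-k+1) * vv) := by
      rw [L_pow]
      have : uu^k * ww^n = ww^(N-k+1) := by
        rw [show n = k + (N-k+1) from by omega, uupow_ww]
      linear_combination ((X:ℚ⟦X⟧)^k * vv) * this
    rw [h2, coeff_X_pow_mul', if_pos hkN, lemB]
    by_cases hkn : k = N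
    · subst hkn; simp
    · rw [if_neg (by omega), if_neg hkn, mul_zero]
  rw [Finset.sum_congr rfl hterm, Finset.sum_ite_eq' (range n) N]
  rw [if_pos (by rw [Finset.mem_range]; omega)]

end Stmt9Aux

namespace Stmt9Aux
open PowerSeries

lemma logL_ne : logL ≠ 0 := by
  intro h
  have h1 := congrArg (fun f => HahnSeries.coeff f ((1:ℕ):ℤ)) h
  simp only [logL] at h1
  rw [LaurentSeries.coeff_coe_powerSeries] at h1
  simp [logOnePlus, coeff_mk] at h1

lemma hXn (n : ℕ) : ((X^n : ℚ⟦X⟧) : LaurentSeries ℚ) = HahnSeries.single (n:ℤ) 1 := by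
  rw [PowerSeries.coe_pow, PowerSeries.coe_X, HahnSeries.single_pow]
  simp

lemma laurent (M n : ℕ) : xL^M * (logL^n)⁻¹
    = HahnSeries.single (-(n:ℤ)) 1 * ((X^M * ww^n : ℚ⟦X⟧) : LaurentSeries ℚ) := by
  rw [← div_eq_mul_inv, div_eq_iff (pow_ne_zero n logL_ne)]
  have h1 : logL ^ n = ((logOnePlus ^ n : ℚ⟦X⟧) : LaurentSeries ℚ) := by
    rw [logL, ← PowerSeries.coe_pow]
  rw [h1, mul_assoc, ← PowerSeries.coe_mul]
  have h2 : (X^M * ww^n * logOnePlus^n : ℚ⟦X⟧) = X^n * X^M := by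
    rw [L_pow]
    have h3 : ww^n * uu^n = 1 := by rw [← mul_pow, mul_comm, uu_ww, one_pow]
    linear_combination ((X:ℚ⟦X⟧)^n * X^M) * h3
  rw [h2, PowerSeries.coe_mul, hXn, ← mul_assoc, HahnSeries.single_mul_single,
    neg_add_cancel, one_mul, HahnSeries.single_zero_one, one_mul]
  rw [xL, ← PowerSeries.coe_pow]

end Stmt9Aux


/-- change of variables e^t = 1+x for residues: the coefficient of t^(n-1)
in e^t (e^t-1)^(m-1) equals the coefficient of x^(-1) in x^(m-1)/(log(1+x))^n. -/
theorem stmt_9 (m n : ℕ) (hm : 1 ≤ m) (hn : 1 ≤ n) :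
    PowerSeries.coeff (R := ℚ) (n - 1)
        (PowerSeries.exp ℚ * (PowerSeries.exp ℚ - 1) ^ (m - 1)) =
      (xL ^ (m - 1) * (logL ^ n)⁻¹).coeff (-1) := by
  obtain ⟨M, rfl⟩ : ∃ M, m = M + 1 := ⟨m - 1, by omega⟩
  obtain ⟨N, rfl⟩ : ∃ N, n = N + 1 := ⟨n - 1, by omega⟩
  simp only [Nat.add_sub_cancel]
  rw [Stmt9Aux.mainPS M N, Stmt9Aux.laurent M (N+1)]
  rw [show (-1 : ℤ) = ((N:ℕ):ℤ) + -((N+1 : ℕ):ℤ) from by push_cast; ring]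
  rw [HahnSeries.coeff_single_mul_add, one_mul, LaurentSeries.coeff_coe_powerSeries]
end

section
/- For integers n, s with n > s ≥ 1, the coefficient of x^(-s) in the formal Laurent series x/((1+x) (log(1+x))^n) equals s! * S(n-1, s) / (n-1)!, which is nonzero for 1 ≤ s ≤ n-1. -/
open Nat

open PowerSeries

/-! ### Auxiliary power series development -/

/-- The unit power series `u` with `log(1+x) = x * u`. -/
noncomputable def uu : PowerSeries ℚ := PowerSeries.mk fun k => (-1 : ℚ) ^ k / (k + 1)

lemma log_eq : logOnePlus = X * uu := by
  ext k
  cases k with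
  | zero => simp [logOnePlus, coeff_zero_X_mul]
  | succ k => simp [logOnePlus, uu, coeff_succ_X_mul]

lemma constCoeff_uu : constantCoeff uu = 1 := by
  simp [uu, ← coeff_zero_eq_constantCoeff_apply]

lemma deriv_log : (d⁄dX ℚ logOnePlus) * (1 + X) = 1 := by
  have h : d⁄dX ℚ logOnePlus = PowerSeries.mk fun k => (-1 : ℚ) ^ k := by
    ext k
    rw [coeff_derivative]
    simp only [logOnePlus, coeff_mk, Nat.succ_ne_zero, if_neg, Nat.add_sub_cancel, ↓reduceIte]
    push_cast
    field_simp
  rw [h]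
  ext k
  rw [mul_add, mul_one]
  cases k with
  | zero => simp [coeff_one]
  | succ k =>
    rw [map_add, coeff_one]
    rw [show ((mk fun k => ((-1:ℚ)) ^ k) * X) = X * (mk fun k => ((-1:ℚ)) ^ k) from
      mul_comm _ _, coeff_succ_X_mul, coeff_mk, coeff_mk]
    simp [pow_succ]

noncomputable def hps (n : ℕ) : PowerSeries ℚ := ((1 + X) * uu ^ n)⁻¹

lemma constCoeff_base (n : ℕ) : constantCoeff ((1 + X) * uu ^ n) = 1 := by
  simp [constCoeff_uu]

lemma base_mul_hps (n : ℕ) : ((1 + X) * uu ^ n) * hps n = 1 :=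
  PowerSeries.mul_inv_cancel _ (by rw [constCoeff_base]; norm_num)

lemma constCoeff_hps (n : ℕ) : constantCoeff (hps n) = 1 := by
  rw [hps, PowerSeries.constantCoeff_inv, constCoeff_base]; norm_num

lemma E (n : ℕ) : logOnePlus ^ n * ((1 + X) * hps n) = X ^ n := by
  rw [log_eq, mul_pow]
  have : X ^ n * uu ^ n * ((1 + X) * hps n) = X ^ n * (((1 + X) * uu ^ n) * hps n) := by ring
  rw [this, base_mul_hps, mul_one]

lemma hlogne : logOnePlus ≠ 0 := by
  intro h
  have := congrArg (coeff 1) h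
  simp [logOnePlus] at this

lemma G (m : ℕ) :
    ((m : ℚ⟦X⟧) + 1) * hps (m + 2) =
      ((m : ℚ⟦X⟧) + 1) * ((1 + X) * hps (m + 1))
        - X * (d⁄dX ℚ ((1 + X) * hps (m + 1))) := by
  set L := logOnePlus
  set k := (1 + X) * hps (m + 1) with hk
  have e1 : L ^ (m + 1) * k = X ^ (m + 1) := E (m + 1)
  have e2 : L ^ (m + 2) * ((1 + X) * hps (m + 2)) = X ^ (m + 2) := E (m + 2)
  have e3 := congrArg (d⁄dX ℚ) e1
  rw [Derivation.leibniz, Derivation.leibniz_pow, Derivation.leibniz_pow, derivative_X] at e3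
  simp only [smul_eq_mul, nsmul_eq_mul, Nat.add_sub_cancel, mul_one, Nat.cast_add,
    Nat.cast_one] at e3
  have hx1 : (1 + X : ℚ⟦X⟧) ≠ 0 := fun h => by
    have := congrArg (constantCoeff) h; simp at this
  have hA : L ^ (m + 2) * (1 + X) ≠ 0 :=
    mul_ne_zero (pow_ne_zero _ hlogne) hx1
  apply mul_left_cancel₀ hA
  linear_combination (((m : ℚ⟦X⟧) + 1)) * e2 + (X * L * (1 + X)) * e3
    - (((m : ℚ⟦X⟧) + 1) * X * k * L ^ (m + 1)) * _root_.deriv_log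
    - (((m : ℚ⟦X⟧) + 1) * (X + L * (1 + X))) * e1

lemma castmul (a : ℚ) (f : ℚ⟦X⟧) (j : ℕ) :
    coeff j ((C a) * f) = a * coeff j f := coeff_C_mul _ _ _

lemma CR (m j : ℕ) :
    ((m : ℚ) + 1) * coeff j (hps (m + 2)) =
      ((m : ℚ) + 1 - j) * coeff j ((1 + X) * hps (m + 1)) := by
  have h := congrArg (coeff j) (G m)
  have hc : ((m : ℚ⟦X⟧) + 1) = C ((m : ℚ) + 1) := by
    rw [map_add, map_one, map_natCast]
  rw [hc, map_sub, castmul, castmul] at h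
  have hX : coeff j (X * (d⁄dX ℚ ((1 + X) * hps (m + 1)))) =
      (j : ℚ) * coeff j ((1 + X) * hps (m + 1)) := by
    cases j with
    | zero => simp [coeff_zero_X_mul]
    | succ l =>
      rw [coeff_succ_X_mul, coeff_derivative]
      push_cast; ring
  rw [hX] at h
  rw [h]; ring

lemma stirling_gt : ∀ n m, n < m → stirling n m = 0 := by
  intro n
  induction n with
  | zero => intro m hm; obtain ⟨k, rfl⟩ := Nat.exists_eq_add_of_lt hm; rfl
  | succ n ih =>
    intro m hm
    obtain ⟨k, rfl⟩ : ∃ k, m = k + 1 := ⟨m - 1, by omega⟩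
    show (k + 1) * stirling n (k + 1) + stirling n k = 0
    rw [ih _ (by omega), ih _ (by omega)]; ring

lemma stirling_self : ∀ n, stirling n n = 1 := by
  intro n
  induction n with
  | zero => rfl
  | succ n ih =>
    show (n + 1) * stirling n (n + 1) + stirling n n = 1
    rw [stirling_gt n (n+1) (by omega), ih]; ring

lemma stirling_pos : ∀ n m, 1 ≤ m → m ≤ n → 0 < stirling n m := by
  intro n
  induction n with
  | zero => intro m h1 h2; omega
  | succ n ih =>
    intro m h1 h2
    obtain ⟨k, rfl⟩ : ∃ k, m = k + 1 := ⟨m - 1, by omega⟩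
    show 0 < (k + 1) * stirling n (k + 1) + stirling n k
    rcases Nat.eq_zero_or_pos k with rfl | hk
    · rcases Nat.eq_zero_or_pos n with rfl | hn
      · simp [stirling]
      · have := ih 1 le_rfl hn
        simp only [Nat.zero_add, one_mul]
        omega
    · have := ih k hk (by omega)
      omega

lemma coeff_one_add_X_mul (f : ℚ⟦X⟧) (l : ℕ) :
    coeff (l + 1) ((1 + X) * f) = coeff (l + 1) f + coeff l f := by
  rw [add_mul, one_mul, map_add, coeff_succ_X_mul]

lemma main : ∀ m : ℕ, ∀ j ≤ m,
    ((m)! : ℚ) * coeff j (hps (m + 1)) = (((m - j)! * stirling m (m - j) : ℕ) : ℚ) := by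
  intro m
  induction m with
  | zero =>
    intro j hj
    interval_cases j
    rw [coeff_zero_eq_constantCoeff_apply, constCoeff_hps]
    simp [stirling]
  | succ m ih =>
    intro j hj
    rcases Nat.eq_zero_or_pos j with rfl | hjpos
    · rw [coeff_zero_eq_constantCoeff_apply, constCoeff_hps]
      simp [stirling_self]
    obtain ⟨l, rfl⟩ : ∃ l, j = l + 1 := ⟨j - 1, by omega⟩
    have hcr := CR m (l + 1)
    rw [coeff_one_add_X_mul] at hcr
    rcases Nat.lt_or_ge l m with hlm | hlm
    · obtain ⟨q, rfl⟩ : ∃ q, m = l + 1 + q := ⟨m - l - 1, by omega⟩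
      have ih1 := ih (l + 1) (by omega)
      have ih2 := ih l (by omega)
      have e1 : l + 1 + q - (l + 1) = q := by omega
      have e2 : l + 1 + q - l = q + 1 := by omega
      have e3 : l + 1 + q + 1 - (l + 1) = q + 1 := by omega
      rw [e1] at ih1; rw [e2] at ih2; rw [e3]
      have hst : stirling (l + 1 + q + 1) (q + 1)
          = (q + 1) * stirling (l + 1 + q) (q + 1) + stirling (l + 1 + q) q := by
        have : l + 1 + q + 1 = (l + 1 + q) + 1 := by omega
        rw [this]; rfl
      rw [hst, factorial_succ (l + 1 + q), factorial_succ q]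
      push_cast [Nat.factorial_succ] at ih1 ih2 hcr ⊢
      linear_combination ((Nat.factorial (l + 1 + q) : ℕ) : ℚ) * hcr + ((q : ℚ) + 1) * ih1
        + ((q : ℚ) + 1) * ih2
    · have hl : l = m := by omega
      subst hl
      have hz : coeff (l + 1) (hps (l + 2)) = 0 := by
        have hfac : ((l : ℚ) + 1 - (l + 1 : ℕ)) = 0 := by push_cast; ring
        rw [hfac, zero_mul] at hcr
        have : ((l : ℚ) + 1) ≠ 0 := by positivity
        exact (mul_eq_zero.mp hcr).resolve_left this
      rw [hz, Nat.sub_self]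
      simp [stirling]

/-! ### Transfer to Laurent series -/

noncomputable abbrev toL : PowerSeries ℚ →+* LaurentSeries ℚ := HahnSeries.ofPowerSeries ℤ ℚ

lemma hLne : logL ≠ 0 := by
  intro h
  apply hlogne
  apply HahnSeries.ofPowerSeries_injective (Γ := ℤ) (R := ℚ)
  rw [map_zero]
  exact h

lemma h1xne : (1 + xL) ≠ 0 := by
  have h1 : (1 + xL) = toL (1 + X) := by rw [map_add, map_one]; rfl
  rw [h1]
  intro h
  have : (1 + X : ℚ⟦X⟧) = 0 := by
    apply HahnSeries.ofPowerSeries_injective (Γ := ℤ) (R := ℚ)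
    rw [map_zero]; exact h
  have := congrArg (constantCoeff) this
  simp at this


/-- for n > s ≥ 1, the coefficient of x^(-s) in x/((1+x)(log(1+x))^n)
equals s! S(n-1,s)/(n-1)!, which is nonzero. -/
theorem stmt_14 (n s : ℕ) (hs : 1 ≤ s) (hn : s < n) :
    (xL * (1 + xL)⁻¹ * (logL ^ n)⁻¹).coeff (-(s : ℤ)) =
        (s ! * stirling (n - 1) s : ℚ) / (n - 1)! ∧
      (xL * (1 + xL)⁻¹ * (logL ^ n)⁻¹).coeff (-(s : ℤ)) ≠ 0 := by
  have hlogL : logL = xL * (uu : LaurentSeries ℚ) := by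
    rw [logL, log_eq]; exact map_mul toL X uu
  have hpow : logL ^ n ≠ 0 := pow_ne_zero _ hLne
  have key1 : xL ^ (n - 1) * (xL * (1 + xL)⁻¹ * (logL ^ n)⁻¹) = ((hps n : LaurentSeries ℚ)) := by
    apply mul_right_cancel₀ (mul_ne_zero h1xne hpow)
    have lhs : xL ^ (n - 1) * (xL * (1 + xL)⁻¹ * (logL ^ n)⁻¹) * ((1 + xL) * logL ^ n)
        = xL ^ (n - 1) * xL * (((1 + xL)⁻¹ * (1 + xL)) * ((logL ^ n)⁻¹ * logL ^ n)) := by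
      ring
    rw [lhs, inv_mul_cancel₀ h1xne, inv_mul_cancel₀ hpow, mul_one, mul_one,
      ← pow_succ, Nat.sub_add_cancel (by omega : 1 ≤ n)]
    have rhs : (hps n : LaurentSeries ℚ) * ((1 + xL) * logL ^ n)
        = xL ^ n * ((hps n : LaurentSeries ℚ) * ((1 + xL) * (uu : LaurentSeries ℚ) ^ n)) := by
      rw [hlogL]; ring
    rw [rhs]
    have hone : (hps n : LaurentSeries ℚ) * ((1 + xL) * (uu : LaurentSeries ℚ) ^ n) = 1 := by
      have : (1 + xL) * (uu : LaurentSeries ℚ) ^ n = toL ((1 + X) * uu ^ n) := by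
        rw [map_mul, map_add, map_one, map_pow]; rfl
      rw [this, show (hps n : LaurentSeries ℚ) = toL (hps n) from rfl, ← map_mul,
        mul_comm, base_mul_hps, map_one]
    rw [hone, mul_one]
  have hxpow : (xL : LaurentSeries ℚ) ^ (n - 1) = HahnSeries.single ((n - 1 : ℕ) : ℤ) 1 := by
    rw [xL, HahnSeries.ofPowerSeries_X, HahnSeries.single_pow]
    simp
  have hcoeff : (xL * (1 + xL)⁻¹ * (logL ^ n)⁻¹).coeff (-(s : ℤ))
      = PowerSeries.coeff (n - 1 - s) (hps n) := by
    have := congrArg (fun f => HahnSeries.coeff f ((-(s : ℤ)) + ((n - 1 : ℕ) : ℤ))) key1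
    simp only [hxpow] at this
    rw [HahnSeries.coeff_single_mul_add, one_mul] at this
    rw [this]
    have harg : (-(s : ℤ)) + ((n - 1 : ℕ) : ℤ) = ((n - 1 - s : ℕ) : ℤ) := by
      push_cast [Nat.cast_sub (by omega : 1 ≤ n), Nat.cast_sub (by omega : s ≤ n - 1)]
      ring
    rw [harg, HahnSeries.ofPowerSeries_apply_coeff]
  have hmain := main (n - 1) (n - 1 - s) (by omega)
  have hsub : (n - 1) - (n - 1 - s) = s := by omega
  rw [hsub] at hmain
  rw [show n - 1 + 1 = n by omega] at hmain
  have hfne : ((n - 1)! : ℚ) ≠ 0 := by positivity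
  have hA : (xL * (1 + xL)⁻¹ * (logL ^ n)⁻¹).coeff (-(s : ℤ))
      = (s ! * stirling (n - 1) s : ℚ) / (n - 1)! := by
    rw [hcoeff, eq_div_iff hfne]
    push_cast at hmain
    linear_combination hmain
  refine ⟨hA, ?_⟩
  rw [hA]
  have hstir : 0 < stirling (n - 1) s := stirling_pos (n - 1) s hs (by omega)
  have hnum : (0 : ℚ) < (s ! * stirling (n - 1) s : ℚ) := by
    have : 0 < s ! * stirling (n - 1) s := Nat.mul_pos (Nat.factorial_pos s) hstir
    exact_mod_cast this
  have hden : (0 : ℚ) < ((n - 1)! : ℚ) := by positivity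
  exact ne_of_gt (div_pos hnum hden)
end
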